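/- Suppose (aₙ) and (bₙ) are strictly positive, aₙ is non-increasing, aₙ → 0, aₙ/bₙ → 0, and ∑ bₙ = ∞. Then for every bijection f : ℕ → ℕ there exists a set A ⊆ ℕ such that ∑_{n∈A} bₙ diverges but ∑_{n∈f(A)} aₙ converges. Consequently, ℕ_{aₙ} and ℕ_{bₙ} are not homeomorphic. -/

import Mathlib

open Set Filter Topology

/-- The topology on `ℕ` whose closed sets are `{A | ∑_{n ∈ A} a n < ∞} ∪ {univ}`. -/
noncomputable def seriesTopology (a : ℕ → ℝ) : TopologicalSpace ℕ :=
  TopologicalSpace.ofClosed {A : Set ℕ | Summable (A.indicator a) ∨ A = Set.univ}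
    (Or.inl (by rw [Set.indicator_empty]; exact summable_zero))
    (fun 𝒮 h𝒮 => by
      by_cases h : ∃ A ∈ 𝒮, Summable (A.indicator a)
      · obtain ⟨A, hA, hsum⟩ := h
        left
        have hsub : ⋂₀ 𝒮 ⊆ A := Set.sInter_subset_of_mem hA
        have h2 := hsum.indicator (⋂₀ 𝒮)
        rwa [Set.indicator_indicator, Set.inter_eq_self_of_subset_left hsub] at h2
      · right
        push_neg at h
        rw [Set.sInter_eq_univ]
        intro A hA
        rcases h𝒮 hA with hs | h1
        · exact absurd hs (h A hA)
        · exact h1)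
    (fun A hA B hB => by
      rcases hA with hA | rfl
      · rcases hB with hB | rfl
        · left
          have hBA : Summable ((B \ A).indicator a) := by
            have h2 := hB.indicator (B \ A)
            rwa [Set.indicator_indicator,
              Set.inter_eq_self_of_subset_left Set.diff_subset] at h2
          have hsum := hA.add hBA
          have heq : (A ∪ B).indicator a = A.indicator a + (B \ A).indicator a := by
            rw [← Set.union_diff_self,
              Set.indicator_union_of_disjoint disjoint_sdiff_self_right]; rfl
          rw [heq, Pi.add_def]; exact hsum
        · right; rw [Set.union_univ]
      · right; rw [Set.univ_union])

/-!
Fix a bijection `f` and `ε > 0`, and let `S_ε = {n | a (f n) ≤ ε b n ∧ a (f n) ≤ ε}`. Past some `N`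
we have `a n ≤ ε/2 · b n` and `a (f n) ≤ ε`, so every `n ≥ N` outside `S_ε` satisfies
`ε b n < a (f n)`, which forces `f n < n` because `a` is non-increasing. Injectivity of `f` then
bounds the `b`-mass of `[N, M) \ S_ε` by `ε⁻¹ ∑_{m<M} a m ≤ C + ½ ∑_{N≤n<M} b n`; since
`∑ b = ∞`, the set `S_ε` has infinite `b`-mass.

Inside `S_{2^{-k}} ∩ (k, ∞)` take the shortest initial block of `b`-mass at least `1`; dropping its
last element leaves `b`-mass below `1`, so its `a ∘ f`-mass is at most `2 · 2^{-k}`. The union `A` of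
these blocks has `∑_A b = ∞` and `∑_{f(A)} a = ∑_A a ∘ f < ∞`. For a homeomorphism
`h : ℕ_a → ℕ_b`, the choice `f = h⁻¹` makes `f(A)` closed in `ℕ_a` although `A ≠ ℕ` is not closed
in `ℕ_b`.
-/

open Finset Function

theorem sum_biUnion_le_of_nonneg {ι α M : Type*} [DecidableEq α] [AddCommMonoid M]
    [PartialOrder M] [IsOrderedAddMonoid M] {s : Finset ι} {t : ι → Finset α} {f : α → M}
    (hf : ∀ x, 0 ≤ f x) : ∑ x ∈ s.biUnion t, f x ≤ ∑ i ∈ s, ∑ x ∈ t i, f x := by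
  classical
  induction s using Finset.induction_on with
  | empty => simp
  | insert i s hi ih =>
    rw [Finset.biUnion_insert, sum_insert hi]
    calc ∑ x ∈ t i ∪ s.biUnion t, f x
        ≤ ∑ x ∈ t i ∪ s.biUnion t, f x + ∑ x ∈ t i ∩ s.biUnion t, f x :=
          le_add_of_nonneg_right (sum_nonneg fun x _ => hf x)
      _ = ∑ x ∈ t i, f x + ∑ x ∈ s.biUnion t, f x := sum_union_inter
      _ ≤ ∑ x ∈ t i, f x + ∑ j ∈ s, ∑ x ∈ t j, f x := by gcongr

theorem sum_comp_le_sum_of_injective {ι κ M : Type*} [AddCommMonoid M] [PartialOrder M]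
    [IsOrderedAddMonoid M] {a : κ → M} {f : ι → κ} (ha : ∀ x, 0 ≤ a x) (hf : Injective f)
    {s : Finset ι} {t : Finset κ} (hst : ∀ i ∈ s, f i ∈ t) : ∑ i ∈ s, a (f i) ≤ ∑ x ∈ t, a x := by
  classical
  rw [← sum_image hf.injOn]
  exact sum_le_sum_of_subset_of_nonneg (by simpa [subset_iff] using hst) fun x _ _ => ha x

def dominatedSet (c b : ℕ → ℝ) (ε : ℝ) : Set ℕ := {n | c n ≤ ε * b n ∧ c n ≤ ε}

theorem mul_sum_Ico_le_sum_indicator_dominatedSet {a b : ℕ → ℝ} {f : ℕ → ℕ} {ε : ℝ} {N M : ℕ}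
    (ha : ∀ n, 0 ≤ a n) (hb : ∀ n, 0 ≤ b n) (hmono : Antitone a) (hf : Injective f)
    (hε : 0 ≤ ε) (hN : ∀ n ≥ N, a n ≤ ε / 2 * b n ∧ a (f n) ≤ ε) (hNM : N ≤ M) :
    ε * ∑ n ∈ Ico N M, b n ≤
      2 * (ε * ∑ n ∈ Ico N M, (dominatedSet (a ∘ f) b ε).indicator b n + ∑ n ∈ range N, a n) := by
  classical
  set S := dominatedSet (a ∘ f) b ε
  have hbad : ∀ n ≥ N, n ∉ S → ε * b n ≤ a (f n) ∧ f n < n := by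
    intro n hn hnS
    have hlt : ε * b n < a (f n) := by
      by_contra! hle
      exact hnS ⟨hle, (hN n hn).2⟩
    refine ⟨hlt.le, lt_of_not_ge fun hge => ?_⟩
    nlinarith [hmono hge, (hN n hn).1, hb n, hε]
  set B := (Finset.Ico N M).filter (· ∉ S)
  have hsplit : ∑ n ∈ Ico N M, b n = ∑ n ∈ Ico N M, S.indicator b n + ∑ n ∈ B, b n := by
    simp only [indicator_apply, ← sum_filter]
    exact (sum_filter_add_sum_filter_not _ _ _).symm
  have hB : ε * ∑ n ∈ B, b n ≤ ∑ m ∈ range M, a m := by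
    have hmem : ∀ n ∈ B, N ≤ n ∧ n < M ∧ n ∉ S := fun n hn => by
      simp only [B, mem_filter, Finset.mem_Ico] at hn
      exact ⟨hn.1.1, hn.1.2, hn.2⟩
    rw [mul_sum]
    refine (sum_le_sum fun n hn => (hbad n (hmem n hn).1 (hmem n hn).2.2).1).trans ?_
    refine sum_comp_le_sum_of_injective ha hf fun n hn => Finset.mem_range.2 ?_
    exact (hbad n (hmem n hn).1 (hmem n hn).2.2).2.trans (hmem n hn).2.1
  have htail : ∑ n ∈ Ico N M, a n ≤ ε / 2 * ∑ n ∈ Ico N M, b n := by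
    rw [mul_sum]
    exact sum_le_sum fun n hn => (hN n (Finset.mem_Ico.1 hn).1).1
  have hsum : ε * ∑ n ∈ Ico N M, b n ≤ ε * ∑ n ∈ Ico N M, S.indicator b n +
      ∑ n ∈ range N, a n + ε / 2 * ∑ n ∈ Ico N M, b n :=
    calc ε * ∑ n ∈ Ico N M, b n
        = ε * ∑ n ∈ Ico N M, S.indicator b n + ε * ∑ n ∈ B, b n := by rw [hsplit, mul_add]
      _ ≤ ε * ∑ n ∈ Ico N M, S.indicator b n + ∑ m ∈ range M, a m := by gcongr
      _ = ε * ∑ n ∈ Ico N M, S.indicator b n + ∑ n ∈ range N, a n + ∑ n ∈ Ico N M, a n := by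
        rw [← sum_range_add_sum_Ico _ hNM, add_assoc]
      _ ≤ _ := by gcongr
  linarith

theorem not_summable_indicator_dominatedSet {a b : ℕ → ℝ} {f : ℕ → ℕ} (ha : ∀ n, 0 ≤ a n)
    (hb : ∀ n, 0 < b n) (hmono : Antitone a) (ha0 : Tendsto a atTop (𝓝 0))
    (hab : Tendsto (fun n => a n / b n) atTop (𝓝 0)) (hbdiv : ¬ Summable b) (hf : Injective f)
    {ε : ℝ} (hε : 0 < ε) : ¬ Summable ((dominatedSet (a ∘ f) b ε).indicator b) := by
  intro hS
  obtain ⟨N, hN⟩ : ∃ N, ∀ n ≥ N, a n ≤ ε / 2 * b n ∧ a (f n) ≤ ε := by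
    have hsmall : ∀ᶠ n in atTop, a n ≤ ε / 2 * b n :=
      (hab.eventually (gt_mem_nhds (half_pos hε))).mono fun n hn => by
        rw [div_lt_iff₀ (hb n)] at hn
        exact hn.le
    exact eventually_atTop.1
      (hsmall.and ((ha0.comp hf.nat_tendsto_atTop).eventually (ge_mem_nhds hε)))
  set T := ∑' n, (dominatedSet (a ∘ f) b ε).indicator b n
  refine hbdiv ((summable_nat_add_iff N).1 (summable_of_sum_range_le (fun n => (hb _).le)
    (c := 2 * (ε * T + ∑ n ∈ range N, a n) / ε) fun M => ?_))
  have hT : ∑ n ∈ Ico N (N + M), (dominatedSet (a ∘ f) b ε).indicator b n ≤ T :=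
    hS.sum_le_tsum _ fun n _ => indicator_nonneg (fun n _ => (hb n).le) n
  have hshift : ∑ n ∈ range M, b (n + N) = ∑ n ∈ Ico N (N + M), b n := by
    rw [sum_Ico_eq_sum_range, Nat.add_sub_cancel_left]
    simp only [add_comm]
  rw [le_div_iff₀' hε]
  calc ε * ∑ n ∈ range M, b (n + N)
      = ε * ∑ n ∈ Ico N (N + M), b n := by rw [hshift]
    _ ≤ 2 * (ε * ∑ n ∈ Ico N (N + M), (dominatedSet (a ∘ f) b ε).indicator b n +
          ∑ n ∈ range N, a n) :=
        mul_sum_Ico_le_sum_indicator_dominatedSet ha (fun n => (hb n).le) hmono hf hε.le hN (N.le_add_right M)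
    _ ≤ 2 * (ε * T + ∑ n ∈ range N, a n) := by gcongr

theorem exists_finset_one_le_sum_of_not_summable {b c : ℕ → ℝ} {ε : ℝ} (hb : ∀ n, 0 ≤ b n)
    (hε : 0 ≤ ε) (hS : ¬ Summable ((dominatedSet c b ε).indicator b)) (m : ℕ) :
    ∃ F : Finset ℕ, (∀ n ∈ F, m ≤ n) ∧ 1 ≤ ∑ n ∈ F, b n ∧ ∑ n ∈ F, c n ≤ 2 * ε := by
  classical
  set S := dominatedSet c b ε
  have hex : ∃ M, 1 ≤ ∑ n ∈ Ico m M, S.indicator b n := by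
    have htop := (not_summable_iff_tendsto_nat_atTop_of_nonneg
      (indicator_nonneg fun n _ => hb n)).1 hS
    obtain ⟨M, hM, hmM⟩ := ((htop.eventually_ge_atTop
      (∑ n ∈ range m, S.indicator b n + 1)).and (eventually_ge_atTop m)).exists
    exact ⟨M, by rw [sum_Ico_eq_sub _ hmM]; linarith⟩
  set M := Nat.find hex
  have hM : 1 ≤ ∑ n ∈ Ico m M, S.indicator b n := Nat.find_spec hex
  have hmM : m < M := by
    by_contra! h
    rw [Finset.Ico_eq_empty_of_le h, sum_empty] at hM
    linarith
  obtain ⟨M', hM'⟩ : ∃ M', M = M' + 1 := ⟨M - 1, by omega⟩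
  have hmM' : m ≤ M' := by omega
  have hprev : ∑ n ∈ Ico m M', S.indicator b n < 1 :=
    lt_of_not_ge (Nat.find_min hex (by omega))
  refine ⟨(Finset.Ico m M).filter (· ∈ S), fun n hn => (Finset.mem_Ico.1 (mem_filter.1 hn).1).1,
    ?_, ?_⟩
  · simpa only [indicator_apply, ← sum_filter] using hM
  · have hle : ∀ n, S.indicator c n ≤ ε * S.indicator b n := fun n => by
      by_cases hn : n ∈ S
      · simpa [hn] using hn.1
      · simp [hn]
    have hlast : S.indicator c M' ≤ ε := by
      by_cases hn : M' ∈ S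
      · simpa [hn] using hn.2
      · simpa [hn] using hε
    simp only [← indicator_apply, sum_filter]
    rw [hM', sum_Ico_succ_top hmM']
    calc ∑ n ∈ Ico m M', S.indicator c n + S.indicator c M'
        ≤ ε * ∑ n ∈ Ico m M', S.indicator b n + ε := by
          rw [mul_sum]
          exact add_le_add (sum_le_sum fun n _ => hle n) hlast
      _ ≤ 2 * ε := by nlinarith

theorem not_summable_indicator_iUnion {b : ℕ → ℝ} {F : ℕ → Finset ℕ}
    (hF : ∀ k, ∀ n ∈ F k, k < n) (hFb : ∀ k, 1 ≤ ∑ n ∈ F k, b n) :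
    ¬ Summable ((⋃ k, (F k : Set ℕ)).indicator b) := by
  intro hs
  obtain ⟨s, hs⟩ := hs.vanishing (Iio_mem_nhds one_pos)
  obtain ⟨K, hK⟩ := s.exists_nat_subset_range
  have hdisj : Disjoint (F K) s := Finset.disjoint_left.2 fun n hn hns =>
    (Finset.mem_range.1 (hK hns)).not_gt (hF K n hn)
  have hsum : ∑ n ∈ F K, (⋃ k, (F k : Set ℕ)).indicator b n = ∑ n ∈ F K, b n :=
    sum_congr rfl fun n hn => indicator_of_mem (mem_iUnion.2 ⟨K, hn⟩) b
  exact (hFb K).not_gt (hsum ▸ hs (F K) hdisj)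

theorem summable_indicator_iUnion {c d : ℕ → ℝ} {F : ℕ → Finset ℕ} (hc : ∀ n, 0 ≤ c n)
    (hF : ∀ k, ∀ n ∈ F k, k < n) (hFc : ∀ k, ∑ n ∈ F k, c n ≤ d k) (hd : Summable d) :
    Summable ((⋃ k, (F k : Set ℕ)).indicator c) := by
  classical
  refine summable_of_sum_range_le (c := ∑' k, d k) (indicator_nonneg fun n _ => hc n)
    fun M => ?_
  have hsub : (range M).filter (· ∈ ⋃ k, (F k : Set ℕ)) ⊆ (range M).biUnion F := by
    intro n hn
    simp only [mem_filter, Finset.mem_range, mem_iUnion, Finset.mem_coe] at hn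
    obtain ⟨hnM, k, hk⟩ := hn
    exact mem_biUnion.2 ⟨k, Finset.mem_range.2 ((hF k n hk).trans hnM), hk⟩
  calc ∑ n ∈ range M, (⋃ k, (F k : Set ℕ)).indicator c n
      = ∑ n ∈ (range M).filter (· ∈ ⋃ k, (F k : Set ℕ)), c n := by
        simp only [indicator_apply, ← sum_filter]
    _ ≤ ∑ n ∈ (range M).biUnion F, c n :=
        sum_le_sum_of_subset_of_nonneg hsub fun n _ _ => hc n
    _ ≤ ∑ k ∈ range M, ∑ n ∈ F k, c n := sum_biUnion_le_of_nonneg hc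
    _ ≤ ∑ k ∈ range M, d k := sum_le_sum fun k _ => hFc k
    _ ≤ ∑' k, d k := hd.sum_le_tsum _ fun k _ => (sum_nonneg fun n _ => hc n).trans (hFc k)

theorem exists_not_summable_summable_indicator {b c : ℕ → ℝ} (hb : ∀ n, 0 ≤ b n)
    (hc : ∀ n, 0 ≤ c n) (h : ∀ ε > 0, ¬ Summable ((dominatedSet c b ε).indicator b)) :
    ∃ A : Set ℕ, A ≠ univ ∧ ¬ Summable (A.indicator b) ∧ Summable (A.indicator c) := by
  choose F hFm hFb hFc using fun k : ℕ =>
    exists_finset_one_le_sum_of_not_summable hb (by positivity) (h _ (by positivity)) (k + 1)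
      (ε := (1 / 2) ^ k)
  refine ⟨⋃ k, (F k : Set ℕ), ?_, not_summable_indicator_iUnion hFm hFb,
    summable_indicator_iUnion hc hFm hFc (summable_geometric_two.mul_left 2)⟩
  refine (ne_univ_iff_exists_notMem _).2 ⟨0, ?_⟩
  simp only [mem_iUnion, Finset.mem_coe, not_exists]
  exact fun k hk => (hFm k 0 hk).not_gt k.succ_pos

theorem summable_indicator_image_iff {a : ℕ → ℝ} {f : ℕ → ℕ} (hf : Bijective f) (A : Set ℕ) :
    Summable ((f '' A).indicator a) ↔ Summable (A.indicator (a ∘ f)) := by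
  rw [← (Equiv.ofBijective f hf).summable_iff]
  congr! 1
  ext n
  rw [Function.comp_apply, Equiv.ofBijective_apply, ← indicator_comp_right,
    preimage_image_eq A hf.injective]

theorem isClosed_seriesTopology_iff (a : ℕ → ℝ) (s : Set ℕ) :
    IsClosed[seriesTopology a] s ↔ Summable (s.indicator a) ∨ s = univ := by
  rw [← @isOpen_compl_iff _ _ (seriesTopology a)]
  show sᶜᶜ ∈ _ ↔ _
  rw [compl_compl]
  rfl

theorem isEmpty_homeomorph_of_exists_not_isClosed {X Y : Type*} [TopologicalSpace X]
    [TopologicalSpace Y] (h : ∀ e : Y ≃ X, ∃ A : Set Y, ¬ IsClosed A ∧ IsClosed (e '' A)) :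
    IsEmpty (X ≃ₜ Y) := by
  refine ⟨fun φ => ?_⟩
  obtain ⟨A, hA, hφA⟩ := h φ.symm.toEquiv
  exact hA (φ.symm.isClosed_image.1 hφA)

/-- If `aₙ` is non-increasing with `aₙ → 0`, `aₙ/bₙ → 0`, and `∑ bₙ = ∞`, then for every
bijection `f : ℕ → ℕ` there is a set `A` with `∑_A bₙ = ∞` but `∑_{f(A)} aₙ < ∞`.
Consequently, `ℕ_{aₙ}` and `ℕ_{bₙ}` are not homeomorphic. -/
theorem not_homeomorphic_of_ratio_tendsto_zero (a b : ℕ → ℝ)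
    (ha : ∀ n, 0 < a n) (hb : ∀ n, 0 < b n) (hmono : Antitone a)
    (ha0 : Tendsto a atTop (𝓝 0)) (hab : Tendsto (fun n => a n / b n) atTop (𝓝 0))
    (hbdiv : ¬ Summable b) :
    (∀ f : ℕ → ℕ, Function.Bijective f →
      ∃ A : Set ℕ, ¬ Summable (A.indicator b) ∧ Summable ((f '' A).indicator a)) ∧
    IsEmpty (@Homeomorph ℕ ℕ (seriesTopology a) (seriesTopology b)) := by
  have hA : ∀ f : ℕ → ℕ, Bijective f →
      ∃ A : Set ℕ, A ≠ univ ∧ ¬ Summable (A.indicator b) ∧ Summable ((f '' A).indicator a) := by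
    intro f hf
    simp only [summable_indicator_image_iff hf]
    exact exists_not_summable_summable_indicator (fun n => (hb n).le) (fun n => (ha _).le)
      fun ε hε => not_summable_indicator_dominatedSet (fun n => (ha n).le) hb hmono ha0 hab
        hbdiv hf.injective hε
  refine ⟨fun f hf => ?_, @isEmpty_homeomorph_of_exists_not_isClosed ℕ ℕ (seriesTopology a)
    (seriesTopology b) fun e => ?_⟩
  · obtain ⟨A, -, hAb, hAa⟩ := hA f hf
    exact ⟨A, hAb, hAa⟩
  obtain ⟨A, hAu, hAb, hAa⟩ := hA e e.bijective
  refine ⟨A, fun hA => ?_, (isClosed_seriesTopology_iff a _).2 (Or.inl hAa)⟩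
  exact ((isClosed_seriesTopology_iff b A).1 hA).elim hAb hAu
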